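/- Given simplicial (non-metric) G-trees T and T' in the same deformation space, the following conditions are equivalent: (1) there exist morphisms f : T → T' and f' : T' → T; (2) T and T' have the same generalized edge groups; (3) T and T' have the same bi-elliptic groups. Moreover these conditions are satisfied whenever T and T' are both reduced. -/

import Mathlib

set_option autoImplicit false
set_option maxHeartbeats 1000000
open scoped Classical

universe u

section Trees

variable (G : Type u) [Group G]

/-- A (minimal, simplicial) `G`-tree: a simplicial tree together with an action of `G` by
simplicial automorphisms, without inversions, admitting no proper invariant subtree. -/
structure GTree : Type (u + 1) where
  V : Type u
  nonempty : Nonempty V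
  graph : SimpleGraph V
  isTree : graph.IsTree
  act : G →* Equiv.Perm V
  adj_act : ∀ (g : G) (u v : V), graph.Adj u v → graph.Adj (act g u) (act g v)
  noInversion : ∀ (g : G) (u v : V), graph.Adj u v → ¬(act g u = v ∧ act g v = u)
  minimal : ∀ S : Set V, S.Nonempty → (∀ (g : G), ∀ v ∈ S, act g v ∈ S) →
      (∀ u ∈ S, ∀ v ∈ S, ∀ p : graph.Walk u v, p.IsPath → ∀ w ∈ p.support, w ∈ S) →
      S = Set.univ

variable {G}

namespace GTree

variable (T : GTree G)

/-- The stabilizer of a vertex. -/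
def stab (v : T.V) : Subgroup G where
  carrier := {g : G | T.act g v = v}
  one_mem' := by simp
  mul_mem' := by
    intro a b ha hb
    simp only [Set.mem_setOf_eq, map_mul, Equiv.Perm.mul_apply] at *
    rw [hb, ha]
  inv_mem' := by
    intro a ha
    simp only [Set.mem_setOf_eq] at *
    have h : T.act a⁻¹ (T.act a v) = v := by
      rw [← Equiv.Perm.mul_apply, ← map_mul, inv_mul_cancel, map_one, Equiv.Perm.one_apply]
    rwa [ha] at h

/-- The (pointwise) stabilizer of an edge `uv`; since the action has no inversions this is
the full stabilizer of the edge. -/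
def edgeStab (u v : T.V) : Subgroup G := T.stab u ⊓ T.stab v

/-- A subgroup of `G` is elliptic if it fixes a vertex. -/
def Elliptic (H : Subgroup G) : Prop := ∃ v : T.V, ∀ h ∈ H, T.act h v = v

/-- An element of `G` is elliptic if it fixes a vertex. -/
def EllipticElt (g : G) : Prop := ∃ v : T.V, T.act g v = v

/-- An element of `G` is hyperbolic if it fixes no vertex. -/
def Hyperbolic (g : G) : Prop := ∀ v : T.V, T.act g v ≠ v

/-- A `G`-tree is reduced if whenever the stabilizer of an edge `uv` equals the stabilizer
of `u` (i.e. `G_u ≤ G_v`), the two endpoints are in the same orbit. -/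
def Reduced : Prop :=
  ∀ u v : T.V, T.graph.Adj u v → T.stab u ≤ T.stab v → ∃ g : G, T.act g u = v

/-- `T` is a single point. -/
protected def Trivial : Prop := ∀ u v : T.V, u = v

/-- `T` is a (simplicial) line. -/
def IsLine : Prop := ∀ v : T.V, ∃ a b : T.V, a ≠ b ∧ {w : T.V | T.graph.Adj v w} = {a, b}

/-- `G` fixes an end of `T`: there is an equivariant choice, for each vertex, of the next
vertex in the direction of the fixed end. -/
def FixesEnd : Prop :=
  ∃ next : T.V → T.V, (∀ v, T.graph.Adj v (next v)) ∧
    (∀ (g : G) (v : T.V), next (T.act g v) = T.act g (next v)) ∧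
    (∀ v, next (next v) ≠ v)

/-- Linear abelian type: `T` is a line on which `G` acts by translations (every element acts
either trivially or freely). -/
def LinearAbelian : Prop :=
  T.IsLine ∧ ∀ g : G, (∀ v : T.V, T.act g v = v) ∨ (∀ v : T.V, T.act g v ≠ v)

/-- Dihedral type: `T` is a line and some element acts as a reflection. -/
def Dihedral : Prop :=
  T.IsLine ∧ ∃ g : G, (∃ v : T.V, T.act g v = v) ∧ (∃ w : T.V, T.act g w ≠ w)

/-- Genuine abelian type: `G` fixes an end and `T` is not a line. -/
def GenuineAbelian : Prop := T.FixesEnd ∧ ¬T.IsLine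

/-- Irreducibility, via the characterization by hyperbolicity of a commutator. -/
def Irred : Prop :=
  ∃ g h : G, T.Hyperbolic g ∧ T.Hyperbolic h ∧ T.Hyperbolic (g * h * g⁻¹ * h⁻¹)

/-- The image of a dart (oriented edge) under the action of `g`. -/
def dartAct (g : G) (d : T.graph.Dart) : T.graph.Dart :=
  ⟨(T.act g d.toProd.1, T.act g d.toProd.2), T.adj_act g d.toProd.1 d.toProd.2 d.adj⟩

/-- Three oriented edges are aligned (in this order) if some geodesic crosses them
successively, with the correct orientations. -/
def Aligned (d₁ d₂ d₃ : T.graph.Dart) : Prop :=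
  ∃ (u v : T.V) (p : T.graph.Walk u v), p.IsPath ∧ [d₁, d₂, d₃].Sublist p.darts

end GTree

/-- Two `G`-trees lie in the same deformation space iff they have the same elliptic
subgroups. -/
def SameDef (T T' : GTree G) : Prop := ∀ H : Subgroup G, T.Elliptic H ↔ T'.Elliptic H

/-- An equivariant isomorphism of simplicial `G`-trees. -/
def SimpIso (T T' : GTree G) : Prop :=
  ∃ e : T.V ≃ T'.V, (∀ (g : G) (v : T.V), e (T.act g v) = T'.act g (e v)) ∧
    ∀ u v : T.V, T.graph.Adj u v ↔ T'.graph.Adj (e u) (e v)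

end Trees
section Collapses

variable {G : Type u} [Group G]

/-- Two ordered pairs of adjacent vertices span edges in the same `G`-orbit
(as non-oriented edges). -/
def InEdgeOrbit (T : GTree G) (a b c d : T.V) : Prop :=
  ∃ g : G, (T.act g a = c ∧ T.act g b = d) ∨ (T.act g a = d ∧ T.act g b = c)

/-- `c` exhibits `T'` as a (possibly non-elementary) collapse of `T`: it is equivariant,
surjective, sends non-collapsed edges to edges, is onto the edges of `T'`, and its point
preimages are subtrees. -/
def IsCollapseMap (T T' : GTree G) (c : T.V → T'.V) : Prop :=
  (∀ (g : G) (v : T.V), c (T.act g v) = T'.act g (c v)) ∧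
  Function.Surjective c ∧
  (∀ u v : T.V, T.graph.Adj u v → c u ≠ c v → T'.graph.Adj (c u) (c v)) ∧
  (∀ u' v' : T'.V, T'.graph.Adj u' v' → ∃ u v : T.V, T.graph.Adj u v ∧ c u = u' ∧ c v = v') ∧
  (∀ u v : T.V, c u = c v → ∀ p : T.graph.Walk u v, p.IsPath → ∀ w ∈ p.support, c w = c u)

/-- `T'` is obtained from `T` by a (possibly non-elementary) collapse. -/
def CollapseOf (T' T : GTree G) : Prop := ∃ c : T.V → T'.V, IsCollapseMap T T' c

/-- `T'` is obtained from `T` by collapsing (exactly) all the edges in the orbit of a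
single edge. -/
def IsOrbitCollapse (T' T : GTree G) : Prop :=
  ∃ (c : T.V → T'.V) (u₀ v₀ : T.V), T.graph.Adj u₀ v₀ ∧ IsCollapseMap T T' c ∧
    ∀ u v : T.V, T.graph.Adj u v → (c u = c v ↔ InEdgeOrbit T u v u₀ v₀)

/-- An elementary collapse: collapsing the orbit of a collapsible edge, i.e. an orbit
collapse staying in the same deformation space. -/
def ElemCollapse (T T' : GTree G) : Prop := IsOrbitCollapse T' T ∧ SameDef T T'

/-- An elementary move: an elementary collapse or an elementary expansion. -/
def ElemMove (T T' : GTree G) : Prop := ElemCollapse T T' ∨ ElemCollapse T' T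

/-- An elementary deformation: a finite sequence of elementary collapses and expansions. -/
def ElemDeformation (T T' : GTree G) : Prop := Relation.ReflTransGen ElemMove T T'

/-- A slide move: an edge `f = vx` with `G_f ≤ G_e` slides across `e = vw` (and
equivariantly so does its orbit), becoming an edge `f' = wx`. -/
def SlideMove (T T' : GTree G) : Prop :=
  ∃ (e : T.V ≃ T'.V) (v w x : T.V),
    T.graph.Adj v w ∧ T.graph.Adj v x ∧ w ≠ x ∧
    T.edgeStab v x ≤ T.edgeStab v w ∧
    ¬InEdgeOrbit T v w v x ∧
    (∀ (g : G) (u : T.V), e (T.act g u) = T'.act g (e u)) ∧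
    (∀ a b : T.V, T'.graph.Adj (e a) (e b) ↔
      ((T.graph.Adj a b ∧ ¬InEdgeOrbit T a b v x) ∨ InEdgeOrbit T a b w x))

end Collapses

section MetricTrees

variable (G : Type u) [Group G]

/-- A metric `G`-tree: a simplicial `G`-tree together with an equivariant assignment of
positive lengths to the edges. -/
structure MGTree extends GTree G : Type (u + 1) where
  len : V → V → ℝ
  len_symm : ∀ u v : V, len u v = len v u
  len_pos : ∀ u v : V, graph.Adj u v → 0 < len u v
  len_equivariant : ∀ (g : G) (u v : V), len (act g u) (act g v) = len u v

variable {G}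

namespace MGTree

variable (T : MGTree G)

/-- The length of a walk. -/
noncomputable def walkLen {u v : T.V} (p : T.graph.Walk u v) : ℝ :=
  (p.darts.map fun d => T.len d.toProd.1 d.toProd.2).sum

/-- The distance between two vertices: the length of the unique reduced path joining them. -/
noncomputable def dist (u v : T.V) : ℝ :=
  sInf {x : ℝ | ∃ p : T.graph.Walk u v, p.IsPath ∧ x = T.walkLen p}

/-- The translation length of `g`. -/
noncomputable def ell (g : G) : ℝ :=
  sInf {x : ℝ | ∃ v : T.V, x = T.dist v (T.act g v)}

/-- The axis (or characteristic set) of `g`: the set of points moved exactly `ℓ(g)`. -/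
def Axis (g : G) : Set T.V := {v : T.V | T.dist v (T.act g v) = T.ell g}

/-- `T` is abelian: its length function is the absolute value of a homomorphism to `ℝ`
with cyclic image. -/
def IsAbelian : Prop :=
  ∃ φ : G → ℝ, (∀ g h : G, φ (g * h) = φ g + φ h) ∧
    (∃ a : ℝ, ∀ g : G, ∃ n : ℤ, φ g = (n : ℝ) * a) ∧
    ∀ g : G, T.ell g = |φ g|

/-- Irreducibility for metric trees: two hyperbolic elements with disjoint axes. -/
def Irr : Prop :=
  ∃ g h : G, T.toGTree.Hyperbolic g ∧ T.toGTree.Hyperbolic h ∧ T.Axis g ∩ T.Axis h = ∅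

end MGTree

/-- An equivariant simplicial isomorphism multiplying all edge lengths by `c`. -/
def EquivHomothety (c : ℝ) (T T' : MGTree G) : Prop :=
  ∃ e : T.V ≃ T'.V, (∀ (g : G) (v : T.V), e (T.act g v) = T'.act g (e v)) ∧
    (∀ u v : T.V, T.graph.Adj u v ↔ T'.graph.Adj (e u) (e v)) ∧
    ∀ u v : T.V, T.graph.Adj u v → T'.len (e u) (e v) = c * T.len u v

/-- An equivariant isometry of metric `G`-trees. -/
def EquivIsometric (T T' : MGTree G) : Prop := EquivHomothety 1 T T'

/-- The action of an automorphism of `G` on metric `G`-trees, by precomposition. -/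
def MGTree.precomp (φ : MulAut G) (T : MGTree G) : MGTree G where
  V := T.V
  nonempty := T.nonempty
  graph := T.graph
  isTree := T.isTree
  act := T.act.comp φ.toMonoidHom
  adj_act := fun g u v h => T.adj_act (φ g) u v h
  noInversion := fun g u v h => T.noInversion (φ g) u v h
  minimal := fun S h1 h2 h3 => T.minimal S h1
    (fun g v hv => by simpa using h2 (φ.symm g) v hv) h3
  len := T.len
  len_symm := T.len_symm
  len_pos := T.len_pos
  len_equivariant := fun g u v => T.len_equivariant (φ g) u v

end MetricTrees
section Topologies

variable (G : Type u) [Group G]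

/-- Basic Gromov–Hausdorff neighbourhood of the metric `G`-tree `T` determined by finite
sets `X ⊆ T`, `A ⊆ G` and `ε > 0`: the trees admitting an `ε`-approximate equivariant
lift of `X`. -/
def gromovBasic (T : MGTree G) (X : Finset T.V) (A : Finset G) (ε : ℝ) : Set (MGTree G) :=
  {T' : MGTree G | ∃ f : T.V → T'.V, ∀ x ∈ X, ∀ y ∈ X, ∀ g ∈ A,
    |T.dist x (T.act g y) - T'.dist (f x) (T'.act g (f y))| < ε}

/-- The equivariant Gromov–Hausdorff topology on the space of metric `G`-trees. -/
noncomputable def gromovTop : TopologicalSpace (MGTree G) where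
  IsOpen U := ∀ T ∈ U, ∃ (X : Finset T.V) (A : Finset G) (ε : ℝ), 0 < ε ∧
    gromovBasic G T X A ε ⊆ U
  isOpen_univ := fun T _ => ⟨∅, ∅, 1, one_pos, Set.subset_univ _⟩
  isOpen_inter := by
    intro U V hU hV T hT
    obtain ⟨X₁, A₁, ε₁, hε₁, h₁⟩ := hU T hT.1
    obtain ⟨X₂, A₂, ε₂, hε₂, h₂⟩ := hV T hT.2
    refine ⟨X₁ ∪ X₂, A₁ ∪ A₂, min ε₁ ε₂, lt_min hε₁ hε₂, ?_⟩
    intro T' hT'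
    obtain ⟨f, hf⟩ := hT'
    constructor
    · exact h₁ ⟨f, fun x hx y hy g hg =>
        lt_of_lt_of_le (hf x (Finset.mem_union_left _ hx) y (Finset.mem_union_left _ hy) g
          (Finset.mem_union_left _ hg)) (min_le_left _ _)⟩
    · exact h₂ ⟨f, fun x hx y hy g hg =>
        lt_of_lt_of_le (hf x (Finset.mem_union_right _ hx) y (Finset.mem_union_right _ hy) g
          (Finset.mem_union_right _ hg)) (min_le_right _ _)⟩
  isOpen_sUnion := by
    intro s hs T hT
    obtain ⟨U, hUs, hTU⟩ := hT
    obtain ⟨X, A, ε, hε, h⟩ := hs U hUs T hTU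
    exact ⟨X, A, ε, hε, h.trans (Set.subset_sUnion_of_mem hUs)⟩

variable {G}

/-- The closed cone of the (restricted) deformation space `D` spanned by `T`: the trees
of `D` obtained from trees having the same underlying simplicial tree as `T` by
(elementary) collapses. -/
def closedCone (D : Set (MGTree G)) (T : MGTree G) : Set (MGTree G) :=
  {T' : MGTree G | T' ∈ D ∧ CollapseOf T'.toGTree T.toGTree}

/-- The open cone containing `T`: the trees with the same underlying simplicial tree. -/
def openCone (D : Set (MGTree G)) (T : MGTree G) : Set (MGTree G) :=
  {T' : MGTree G | T' ∈ D ∧ SimpIso T'.toGTree T.toGTree}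

variable (G)

/-- The weak topology on a deformation space `D`: a set is closed if and only if its
intersection with every closed cone of `D` is closed (each closed cone carrying the
Gromov topology). -/
noncomputable def weakTop (D : Set (MGTree G)) : TopologicalSpace ↥D :=
  ⨆ (T : MGTree G) (_ : T ∈ D), TopologicalSpace.coinduced
    (fun x : {S : MGTree G // S ∈ closedCone D T} => (⟨x.1, x.2.1⟩ : ↥D))
    (TopologicalSpace.induced (fun x : {S : MGTree G // S ∈ closedCone D T} => x.1)
      (gromovTop G))

variable {G}

/-- The projectivizing relation on a deformation space: agreement up to rescaling, i.e.
equivariant homothety. -/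
def projRel (D : Set (MGTree G)) (a b : ↥D) : Prop :=
  ∃ c : ℝ, 0 < c ∧ EquivHomothety c a.1 b.1

/-- The relation of equivariant isometry on a deformation space. -/
def isomRel (D : Set (MGTree G)) (a b : ↥D) : Prop := EquivIsometric a.1 b.1

end Topologies

section Morphisms

variable {G : Type u} [Group G]

/-- A morphism of simplicial `G`-trees: an equivariant map sending each edge onto a
non-degenerate edge path (obtained by subdividing the edge into finitely many subsegments,
each mapped bijectively onto an edge). -/
structure GMorphism (T T' : GTree G) where
  f : T.V → T'.V
  equivariant : ∀ (g : G) (v : T.V), f (T.act g v) = T'.act g (f v)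
  edgeWalk : ∀ u v : T.V, T.graph.Adj u v → T'.graph.Walk (f u) (f v)
  edgeWalk_ne_nil : ∀ (u v : T.V) (h : T.graph.Adj u v), ¬(edgeWalk u v h).Nil
  edgeWalk_symm : ∀ (u v : T.V) (h : T.graph.Adj u v),
    (edgeWalk v u h.symm).support = (edgeWalk u v h).support.reverse
  edgeWalk_equivariant : ∀ (g : G) (u v : T.V) (h : T.graph.Adj u v),
    (edgeWalk (T.act g u) (T.act g v) (T.adj_act g u v h)).support =
      (edgeWalk u v h).support.map (fun x => T'.act g x)

/-- `H` is bi-elliptic in `T`: it fixes two distinct points. -/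
def BiElliptic (T : GTree G) (H : Subgroup G) : Prop :=
  ∃ u v : T.V, u ≠ v ∧ ∀ h ∈ H, T.act h u = u ∧ T.act h v = v

/-- `H` is a generalized edge group of `T`: it is squeezed between two edge stabilizers. -/
def GenEdgeGroup (T : GTree G) (H : Subgroup G) : Prop :=
  ∃ u v u' v' : T.V, T.graph.Adj u v ∧ T.graph.Adj u' v' ∧
    T.edgeStab u v ≤ H ∧ H ≤ T.edgeStab u' v'

/-- `H` belongs to `𝒜_min` (relative to the deformation space of `T₀`): it fixes an edge
in every tree of the deformation space. -/
def Amin (T₀ : GTree G) (H : Subgroup G) : Prop :=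
  ∀ T : GTree G, SameDef T₀ T → ∃ u v : T.V, T.graph.Adj u v ∧ H ≤ T.edgeStab u v

/-- A maximal elliptic subgroup (of the deformation space of `T₀`). -/
def MaxElliptic (T₀ : GTree G) (H : Subgroup G) : Prop :=
  T₀.Elliptic H ∧ ∀ K : Subgroup G, T₀.Elliptic K → H ≤ K → K = H

end Morphisms

section OutG

variable (G : Type u) [Group G]

instance innRange_normal : ((MulAut.conj : G →* MulAut G).range).Normal := by
  constructor
  intro a ha φ
  obtain ⟨g, rfl⟩ := ha
  refine ⟨φ g, ?_⟩
  ext x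
  simp only [MulAut.mul_apply, MulAut.conj_apply, map_mul, map_inv]
  simp [MulAut.inv_def]

/-- The outer automorphism group of `G`. -/
def OutG := MulAut G ⧸ (MulAut.conj : G →* MulAut G).range

noncomputable instance : Group (OutG G) := QuotientGroup.Quotient.group _

/-- The class of an automorphism in `Out(G)`. -/
def toOutG (φ : MulAut G) : OutG G := QuotientGroup.mk φ

end OutG
section RealTrees

variable (G : Type u) [Group G]

/-- A non-trivial minimal `ℝ`-tree with an isometric action of `G`: a geodesic metric
space in which any two points are joined by a unique arc. -/
structure RGTree : Type (u + 1) where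
  X : Type u
  [ms : MetricSpace X]
  nontrivial : Nontrivial X
  geodesic : ∀ x y : X, ∃ f : ℝ → X, f 0 = x ∧ f (dist x y) = y ∧
    ∀ s ∈ Set.Icc (0 : ℝ) (dist x y), ∀ t ∈ Set.Icc (0 : ℝ) (dist x y),
      dist (f s) (f t) = |s - t|
  unique_arc : ∀ (x y : X) (γ : Set.Icc (0 : ℝ) 1 → X), Continuous γ →
    Function.Injective γ → γ ⟨0, by constructor <;> norm_num⟩ = x →
    γ ⟨1, by constructor <;> norm_num⟩ = y →
    ∀ z ∈ Set.range γ, dist x z + dist z y = dist x y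
  act : G →* Equiv.Perm X
  isom : ∀ g : G, Isometry (act g)
  minimal : ∀ S : Set X, S.Nonempty → (∀ (g : G), ∀ x ∈ S, act g x ∈ S) →
    (∀ x ∈ S, ∀ y ∈ S, ∀ z : X, dist x z + dist z y = dist x y → z ∈ S) →
    S = Set.univ

attribute [instance] RGTree.ms

variable {G}

namespace RGTree

variable (R : RGTree G)

/-- `z` lies between `x` and `y` (i.e. on the arc from `x` to `y`). -/
def Btw (x z y : R.X) : Prop := dist x z + dist z y = dist x y

/-- A subgroup is elliptic if it fixes a point. -/
def Elliptic (H : Subgroup G) : Prop := ∃ x : R.X, ∀ h ∈ H, R.act h x = x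

/-- A hyperbolic element fixes no point. -/
def Hyperbolic (g : G) : Prop := ∀ x : R.X, R.act g x ≠ x

/-- The translation length of `g`. -/
noncomputable def ell (g : G) : ℝ :=
  sInf {r : ℝ | ∃ x : R.X, r = dist x (R.act g x)}

/-- The characteristic set of `g`: its axis if `g` is hyperbolic, its fixed point set
if `g` is elliptic. -/
def Axis (g : G) : Set R.X := {x : R.X | dist x (R.act g x) = R.ell g}

/-- The fixed point set of `g`. -/
def Fix (g : G) : Set R.X := {x : R.X | R.act g x = x}

/-- The fixed point set of a subgroup. -/
def FixSub (H : Subgroup G) : Set R.X := {x : R.X | ∀ h ∈ H, R.act h x = x}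

/-- Irreducibility: two hyperbolic elements with disjoint characteristic sets. -/
def Irr : Prop :=
  ∃ g h : G, R.Hyperbolic g ∧ R.Hyperbolic h ∧ R.Axis g ∩ R.Axis h = ∅

/-- The distance between the characteristic sets of `g` and `h`. -/
noncomputable def axesDist (g h : G) : ℝ :=
  sInf {r : ℝ | ∃ x ∈ R.Axis g, ∃ y ∈ R.Axis h, r = dist x y}

end RGTree

/-- `f` realizes the metric simplicial `G`-tree `T` inside the `ℝ`-tree `R`. -/
def IsRealizationMap (R : RGTree G) (T : MGTree G) (f : T.V → R.X) : Prop :=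
  (∀ (g : G) (v : T.V), f (T.act g v) = R.act g (f v)) ∧
  (∀ u v : T.V, dist (f u) (f v) = T.dist u v) ∧
  ∀ x : R.X, ∃ u v : T.V, T.graph.Adj u v ∧ R.Btw (f u) x (f v)

/-- The `ℝ`-tree `R` is (equivariantly isometric to) the geometric realization of the
metric simplicial `G`-tree `T`. -/
def RealizationOf (R : RGTree G) (T : MGTree G) : Prop := ∃ f : T.V → R.X, IsRealizationMap R T f

variable (G)

/-- The equivariant Gromov–Hausdorff topology on the space of `ℝ`-trees. -/
noncomputable def gromovTopR : TopologicalSpace (RGTree G) where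
  IsOpen U := ∀ R ∈ U, ∃ (X : Finset R.X) (A : Finset G) (ε : ℝ), 0 < ε ∧
    {R' : RGTree G | ∃ f : R.X → R'.X, ∀ x ∈ X, ∀ y ∈ X, ∀ g ∈ A,
      |dist x (R.act g y) - dist (f x) (R'.act g (f y))| < ε} ⊆ U
  isOpen_univ := fun R _ => ⟨∅, ∅, 1, one_pos, Set.subset_univ _⟩
  isOpen_inter := by
    intro U V hU hV R hR
    obtain ⟨X₁, A₁, ε₁, hε₁, h₁⟩ := hU R hR.1
    obtain ⟨X₂, A₂, ε₂, hε₂, h₂⟩ := hV R hR.2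
    refine ⟨X₁ ∪ X₂, A₁ ∪ A₂, min ε₁ ε₂, lt_min hε₁ hε₂, ?_⟩
    rintro R' ⟨f, hf⟩
    constructor
    · exact h₁ ⟨f, fun x hx y hy g hg =>
        lt_of_lt_of_le (hf x (Finset.mem_union_left _ hx) y (Finset.mem_union_left _ hy) g
          (Finset.mem_union_left _ hg)) (min_le_left _ _)⟩
    · exact h₂ ⟨f, fun x hx y hy g hg =>
        lt_of_lt_of_le (hf x (Finset.mem_union_right _ hx) y (Finset.mem_union_right _ hy) g
          (Finset.mem_union_right _ hg)) (min_le_right _ _)⟩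
  isOpen_sUnion := by
    intro s hs R hR
    obtain ⟨U, hUs, hRU⟩ := hR
    obtain ⟨X, A, ε, hε, h⟩ := hs U hUs R hRU
    exact ⟨X, A, ε, hε, h.trans (Set.subset_sUnion_of_mem hUs)⟩

/-- The axes topology: the coarsest topology making all translation length functions
continuous. -/
noncomputable def axesTopR : TopologicalSpace (RGTree G) :=
  TopologicalSpace.induced (fun (R : RGTree G) (g : G) => R.ell g) Pi.topologicalSpace

variable {G}

/-- A morphism of `ℝ`-trees: an equivariant map such that every segment is a finite union
of subsegments on each of which the map is isometric. -/
structure RMorphism (R S : RGTree G) where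
  f : R.X → S.X
  equivariant : ∀ (g : G) (x : R.X), f (R.act g x) = S.act g (f x)
  piecewise : ∀ x y : R.X, ∃ (n : ℕ) (c : Fin (n + 1) → R.X),
    c 0 = x ∧ c (Fin.last n) = y ∧ (∀ i : Fin (n + 1), R.Btw x (c i) y) ∧
    ∀ i : Fin n, ∀ p q : R.X, R.Btw (c i.castSucc) p (c i.succ) →
      R.Btw (c i.castSucc) q (c i.succ) → dist (f p) (f q) = dist p q

/-- `M` is the intermediate tree at time `t` of Skora's deformation of the morphism `φ`:
the quotient of the source in which `x` and `y` are identified exactly when `φ` maps the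
segment `[x,y]` into the ball of radius `t` around `φ(x) = φ(y)`. -/
def IsSkoraIntermediate {R S : RGTree G} (φ : RMorphism R S) (t : ℝ) (M : RGTree G) : Prop :=
  ∃ (p : R.X → M.X) (q : M.X → S.X), Function.Surjective p ∧
    (∀ (g : G) (x : R.X), p (R.act g x) = M.act g (p x)) ∧
    (∀ (g : G) (m : M.X), q (M.act g m) = S.act g (q m)) ∧
    (∀ x : R.X, q (p x) = φ.f x) ∧
    (∀ x y : R.X, dist (p x) (p y) ≤ dist x y) ∧
    (∀ m m' : M.X, dist (q m) (q m') ≤ dist m m') ∧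
    ∀ x y : R.X, p x = p y ↔ (φ.f x = φ.f y ∧
      ∀ z : R.X, R.Btw x z y → dist (φ.f z) (φ.f x) ≤ t)

/-- `P` is the basepoint of `R` determined by `g` and `h` (the endpoint of the
intersection of the two characteristic sets, resp. the projection of one onto the other),
characterized by the metric system (1) of [Guirardel–Levitt]. -/
noncomputable def IsBasepoint (R : RGTree G) (g h : G) (P : R.X) : Prop :=
  dist P (R.act g P) = R.ell g ∧
  dist P (R.act h P) = R.ell h + 2 * R.axesDist g h ∧
  dist (R.act g P) (R.act h P) = R.ell g + R.ell h + 2 * R.axesDist g h ∧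
  dist (R.act g P) (R.act h⁻¹ P) = R.ell g + R.ell h + 2 * R.axesDist g h

/-- `p` is a projection of `x` to the set `S` (a closest point of `S`). -/
def IsProj (R : RGTree G) (x : R.X) (S : Set R.X) (p : R.X) : Prop :=
  p ∈ S ∧ ∀ q ∈ S, dist x p ≤ dist x q

/-- Equivariant isometry of `ℝ`-trees. -/
def RIsom (R R' : RGTree G) : Prop :=
  ∃ e : R.X ≃ R'.X, (∀ (g : G) (x : R.X), e (R.act g x) = R'.act g (e x)) ∧
    ∀ x y : R.X, dist (e x) (e y) = dist x y

/-- Equivariant homothety of `ℝ`-trees, with ratio `c`. -/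
def RHomothety (c : ℝ) (R R' : RGTree G) : Prop :=
  ∃ e : R.X ≃ R'.X, (∀ (g : G) (x : R.X), e (R.act g x) = R'.act g (e x)) ∧
    ∀ x y : R.X, dist (e x) (e y) = c * dist x y

end RealTrees
section MoreDefs

variable {G : Type u} [Group G]

/-- `H` is contained in a conjugate of `K`. -/
def ConjLe (H K : Subgroup G) : Prop := ∃ g : G, ∀ h ∈ H, g * h * g⁻¹ ∈ K

/-- `H` represents a maximal element of the vertical set `ℳ` associated to the
deformation space of `T₀`. -/
def MaxVert (T₀ : GTree G) (H : Subgroup G) : Prop :=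
  T₀.Elliptic H ∧ ∀ K : Subgroup G, T₀.Elliptic K → ConjLe H K → ConjLe K H

/-- The vertical set `ℳ`: equivalence classes of maximal elements for containment in a
conjugate, among elliptic subgroups. -/
def vertSet (T₀ : GTree G) : Type u :=
  Quot (fun H K : {H : Subgroup G // MaxVert T₀ H} => ConjLe H.1 K.1 ∧ ConjLe K.1 H.1)

namespace GTree

variable (T : GTree G)

/-- The set of `G`-orbits of vertices (the vertices of the quotient graph `T/G`). -/
def vertexOrbits : Type u := Quot (fun u v : T.V => ∃ g : G, T.act g u = v)

/-- Orbits of neighbours of `v` under the stabilizer of `v`: the oriented edges of the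
quotient graph of groups issued from the image of `v`, whose number is the valence of
the image of `v`. -/
def nbrOrbits (v : T.V) : Type u :=
  Quot (fun a b : {w : T.V // T.graph.Adj v w} => ∃ g : G, T.act g v = v ∧ T.act g a.1 = b.1)

/-- The set of `G`-orbits of (non-oriented) edges. -/
def edgeOrbits : Type u :=
  Quot (fun d d' : T.graph.Dart => ∃ g : G, T.dartAct g d = d' ∨ T.dartAct g d = d'.symm)

/-- BF-reduced: if an edge-to-vertex inclusion `G_e → G_u` is onto, then the image of `u`
in the quotient graph has valence at least 3. -/
def BFReduced : Prop :=
  ∀ u w : T.V, T.graph.Adj u w → T.stab u ≤ T.stab w →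
    3 ≤ Cardinal.mk (T.nbrOrbits u)

end GTree

/-- The quotient graph of groups of `T` has a strict ascending loop: an edge whose
endpoints are in the same orbit, exactly one of the two edge-to-vertex inclusions
being onto. -/
def HasSAL (T : GTree G) : Prop :=
  ∃ u v : T.V, T.graph.Adj u v ∧ (∃ g : G, T.act g u = v) ∧
    Xor' (T.stab u ≤ T.stab v) (T.stab v ≤ T.stab u)

/-- The edge (orbit of) `uv` is a surviving edge: `T` can be made reduced by a collapse
(within its deformation space) not collapsing `uv`. -/
def Surviving (T : GTree G) (u v : T.V) : Prop :=
  ∃ (T' : GTree G) (c : T.V → T'.V), IsCollapseMap T T' c ∧ SameDef T T' ∧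
    T'.Reduced ∧ c u ≠ c v

/-- Containment in a conjugate by an element of `G₀`. -/
def perLe (G₀ : Subgroup G) (H K : Subgroup G) : Prop :=
  ∃ g ∈ G₀, ∀ h ∈ H, g * h * g⁻¹ ∈ K

/-- `H` represents a maximal element of the peripheral structure `ℳ₀` of `G₀`. -/
def PeriphMax (T₀ : GTree G) (G₀ : Subgroup G) (H : Subgroup G) : Prop :=
  H ≤ G₀ ∧ Amin T₀ H ∧
    ∀ K : Subgroup G, K ≤ G₀ → Amin T₀ K → perLe G₀ H K → perLe G₀ K H

/-- The peripheral structure `ℳ₀` of `G₀`, as a set of equivalence classes. -/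
def periphSet (T₀ : GTree G) (G₀ : Subgroup G) : Type u :=
  Quot (fun H K : {H : Subgroup G // PeriphMax T₀ G₀ H} =>
    perLe G₀ H.1 K.1 ∧ perLe G₀ K.1 H.1)

end MoreDefs

/-!
All three conditions are equivalent to: every edge stabilizer of `T` is bi-elliptic in `T'`, and
vice versa. A subgroup is bi-elliptic iff it fixes an edge. A morphism maps an edge `e` onto a
nondegenerate path fixed pointwise by `G_e`, whose first edge is therefore fixed by `G_e`.
Conversely, since vertex stabilizers of `T` are elliptic in `T'`, vertices of `T` can be sent
equivariantly to points of `T'` with larger stabilizers, and edges of `T` to edges of `T'` fixed by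
their stabilizers; joining these up by geodesics gives a morphism. For generalized edge groups one
also needs that every edge stabilizer of `T` contains one of `T'`: by minimality of `T`, the
geodesics between images of vertices of `T'` cover `T`, so the image path of some edge of `T'`
crosses the given edge. Finally, if `T` is reduced and `G_{uv}` fixed only one point `x` of `T'`,
then so would `G_u` and `G_v`; one of them, say `G_u`, lies in the other, and an element `g` with
`g u = v` would fix `x`, hence be elliptic in `T`, while moving `u` to an adjacent vertex.
-/

open SimpleGraph

namespace MulAction

variable {G X Y : Type*} [Group G] [MulAction G X] [MulAction G Y]

theorem exists_mulActionHom_of_stabilizer_le (R : X → Y → Prop)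
    (hR : ∀ (g : G) x y, R x y → R (g • x) (g • y))
    (h : ∀ x, ∃ y, R x y ∧ stabilizer G x ≤ stabilizer G y) :
    ∃ f : X →[G] Y, ∀ x, R x (f x) := by
  choose y hRy hy using h
  let rep : X → X := fun x => (Quotient.mk (orbitRel G X) x).out
  have hrep : ∀ x, ∃ g : G, g • rep x = x := fun x => by
    obtain ⟨g, hg⟩ := Quotient.mk_out (s := orbitRel G X) x
    exact ⟨g⁻¹, by rw [← show g • x = rep x from hg, inv_smul_smul]⟩
  choose c hc using hrep
  have hrep_smul : ∀ (g : G) x, rep (g • x) = rep x := fun g x =>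
    congrArg Quotient.out (Quotient.sound (mem_orbit x g))
  have key : ∀ x (k : G), k • rep x = x → c x • y (rep x) = k • y (rep x) := by
    intro x k hk
    have hmem : k⁻¹ * c x ∈ stabilizer G (rep x) := by
      rw [mem_stabilizer_iff, mul_smul, hc, inv_smul_eq_iff, hk]
    have := hy _ hmem
    rwa [mem_stabilizer_iff, mul_smul, inv_smul_eq_iff] at this
  refine ⟨⟨fun x => c x • y (rep x), fun g x => ?_⟩, fun x => ?_⟩
  · change c (g • x) • y (rep (g • x)) = g • c x • y (rep x)
    rw [key (g • x) (g * c x) (by rw [hrep_smul, mul_smul, hc]), hrep_smul, mul_smul]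
  · have h := hR (c x) _ _ (hRy (rep x))
    rwa [hc] at h

end MulAction

variable {G : Type u} [Group G]

theorem SameDef.symm {T T' : GTree G} (hsame : SameDef T T') : SameDef T' T :=
  fun H => (hsame H).symm

namespace GTree

variable (T : GTree G)

instance : MulAction G T.V := MulAction.compHom T.V T.act

lemma adj_act_iff (g : G) {u v : T.V} : T.graph.Adj (T.act g u) (T.act g v) ↔ T.graph.Adj u v :=
  ⟨fun h => by simpa [map_inv] using T.adj_act g⁻¹ _ _ h, T.adj_act g u v⟩

noncomputable def geodesic (u v : T.V) : T.graph.Walk u v :=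
  (T.isTree.existsUnique_path u v).choose

lemma isPath_geodesic (u v : T.V) : (T.geodesic u v).IsPath :=
  (T.isTree.existsUnique_path u v).choose_spec.1

variable {T} in
lemma eq_geodesic {u v : T.V} {p : T.graph.Walk u v} (hp : p.IsPath) : p = T.geodesic u v :=
  (T.isTree.existsUnique_path u v).choose_spec.2 p hp

lemma support_geodesic_comm (u v : T.V) :
    (T.geodesic u v).support = (T.geodesic v u).support.reverse := by
  rw [← Walk.support_reverse, eq_geodesic (T.isPath_geodesic v u).reverse]

def actHom (g : G) : T.graph →g T.graph := ⟨T.act g, T.adj_act g _ _⟩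

lemma map_geodesic (g : G) (u v : T.V) :
    (T.geodesic u v).map (T.actHom g) = T.geodesic (T.act g u) (T.act g v) :=
  eq_geodesic ((T.isPath_geodesic u v).map (T.act g).injective)

lemma support_geodesic_act (g : G) (u v : T.V) :
    (T.geodesic (T.act g u) (T.act g v)).support = (T.geodesic u v).support.map (T.act g) := by
  rw [← map_geodesic]
  exact Walk.support_map _ _

lemma length_geodesic_act (g : G) (u v : T.V) :
    (T.geodesic (T.act g u) (T.act g v)).length = (T.geodesic u v).length := by
  rw [← map_geodesic]
  exact Walk.length_map _ _

variable {T} in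
lemma act_eq_of_mem_support_geodesic {g : G} {u v w : T.V} (hu : T.act g u = u)
    (hv : T.act g v = v) (hw : w ∈ (T.geodesic u v).support) : T.act g w = w := by
  have h := T.support_geodesic_act g u v
  rw [hu, hv] at h
  exact List.map_eq_map_iff.mp (h.symm.trans (List.map_id _).symm) w hw

lemma biElliptic_iff {H : Subgroup G} :
    BiElliptic T H ↔ ∃ a b : T.V, T.graph.Adj a b ∧ H ≤ T.edgeStab a b := by
  constructor
  · rintro ⟨x, y, hxy, hfix⟩
    have hp : ¬(T.geodesic x y).Nil := Walk.not_nil_of_ne hxy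
    refine ⟨x, (T.geodesic x y).snd, Walk.adj_snd hp, fun h hh => ⟨(hfix h hh).1, ?_⟩⟩
    exact act_eq_of_mem_support_geodesic (hfix h hh).1 (hfix h hh).2
      ((T.geodesic x y).getVert_mem_support 1)
  · rintro ⟨a, b, hab, hle⟩
    exact ⟨a, b, hab.ne, fun h hh => hle hh⟩

variable {T} in
lemma length_geodesic_ne_of_adj {x y : T.V} (hxy : T.graph.Adj x y) (t : T.V) :
    (T.geodesic t x).length ≠ (T.geodesic t y).length := by
  have hT := T.isTree.isAcyclic
  by_cases hx : x ∈ (T.geodesic t y).support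
  · rw [hT.path_concat (T.isPath_geodesic t x) (T.isPath_geodesic t y) hxy hx,
      Walk.length_concat]
    omega
  · have hy := hT.mem_support_of_ne_mem_support_of_adj_of_isPath (T.isPath_geodesic t x)
      (T.isPath_geodesic t y) hxy hx
    rw [hT.path_concat (T.isPath_geodesic t y) (T.isPath_geodesic t x) hxy.symm hy,
      Walk.length_concat]
    omega

variable {T} in
lemma not_adj_act_of_act_eq {g : G} {t : T.V} (ht : T.act g t = t) (x : T.V) :
    ¬T.graph.Adj x (T.act g x) := fun hadj =>
  length_geodesic_ne_of_adj hadj t (by rw [← T.length_geodesic_act g t x, ht])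

variable {T} in
lemma mem_support_geodesic_or {u v : T.V} (huv : T.graph.Adj u v) (w : T.V) :
    v ∈ (T.geodesic w u).support ∨ u ∈ (T.geodesic w v).support :=
  or_iff_not_imp_left.mpr <| T.isTree.isAcyclic.mem_support_of_ne_mem_support_of_adj_of_isPath
    (T.isPath_geodesic w v) (T.isPath_geodesic w u) huv.symm

variable {T} in
lemma mem_edges_geodesic_iff {u v a b : T.V} :
    s(u, v) ∈ (T.geodesic a b).edges ↔ ¬(T.graph.deleteEdges {s(u, v)}).Reachable a b := by
  rw [reachable_deleteEdges_iff_exists_walk, not_exists_not]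
  refine ⟨fun he p => ?_, fun h => h _⟩
  rw [← eq_geodesic p.bypass_isPath] at he
  exact p.edges_bypass_subset_edges he

variable {T} in
lemma reachable_of_mem_support_geodesic {u v a b w : T.V}
    (hab : (T.graph.deleteEdges {s(u, v)}).Reachable a b) (hw : w ∈ (T.geodesic a b).support) :
    (T.graph.deleteEdges {s(u, v)}).Reachable a w := by
  refine reachable_deleteEdges_iff_exists_walk.mpr
    ⟨(T.geodesic a b).takeUntil w hw, fun he => ?_⟩
  exact mem_edges_geodesic_iff.mp ((T.geodesic a b).edges_takeUntil_subset_edges hw he) hab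

lemma exists_mem_support_geodesic (A : Set T.V) (hA : A.Nonempty)
    (hinv : ∀ (g : G), ∀ a ∈ A, T.act g a ∈ A) (w : T.V) :
    ∃ a ∈ A, ∃ b ∈ A, w ∈ (T.geodesic a b).support := by
  suffices h : {w | ∃ a ∈ A, ∃ b ∈ A, w ∈ (T.geodesic a b).support} = Set.univ from
    h.ge (Set.mem_univ w)
  refine T.minimal _ ?_ ?_ ?_
  · obtain ⟨a, ha⟩ := hA
    exact ⟨a, a, ha, a, ha, Walk.start_mem_support _⟩
  · rintro g w ⟨a, ha, b, hb, hw⟩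
    refine ⟨_, hinv g a ha, _, hinv g b hb, ?_⟩
    rw [support_geodesic_act]
    exact List.mem_map_of_mem hw
  · rintro w₁ ⟨a₁, ha₁, b₁, hb₁, hw₁⟩ w₂ ⟨a₂, ha₂, b₂, hb₂, hw₂⟩ p hp w hw
    -- `p` is the reduced form of the walk `w₁ → a₁ → a₂ → w₂`, which stays in the set
    let q := ((T.geodesic a₁ b₁).takeUntil w₁ hw₁).reverse.append
      ((T.geodesic a₁ a₂).append ((T.geodesic a₂ b₂).takeUntil w₂ hw₂))
    rw [eq_geodesic hp, ← eq_geodesic q.bypass_isPath] at hw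
    replace hw := q.support_bypass_subset_support hw
    simp only [q, Walk.mem_support_append_iff, Walk.support_reverse, List.mem_reverse] at hw
    rcases hw with hw | hw | hw
    · exact ⟨a₁, ha₁, b₁, hb₁, Walk.support_takeUntil_subset_support _ _ hw⟩
    · exact ⟨a₁, ha₁, a₂, ha₂, hw⟩
    · exact ⟨a₂, ha₂, b₂, hb₂, Walk.support_takeUntil_subset_support _ _ hw⟩

end GTree

theorem SameDef.nonempty_mulActionHom {T T' : GTree G} (hsame : SameDef T T') :
    Nonempty (T.V →[G] T'.V) := by
  obtain ⟨f, -⟩ := MulAction.exists_mulActionHom_of_stabilizer_le (G := G)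
    (fun (_ : T.V) (_ : T'.V) => True) (fun _ _ _ _ => trivial) fun v =>
      let ⟨x, hx⟩ := (hsame (T.stab v)).mp ⟨v, fun _ h => h⟩
      ⟨x, trivial, hx⟩
  exact ⟨f⟩

theorem exists_edgeStab_le_of_sameDef {T T' : GTree G} (hsame : SameDef T T') {u v : T.V}
    (huv : T.graph.Adj u v) :
    ∃ a b : T'.V, T'.graph.Adj a b ∧ T'.edgeStab a b ≤ T.edgeStab u v := by
  obtain ⟨f⟩ := hsame.symm.nonempty_mulActionHom
  set D := T.graph.deleteEdges {s(u, v)}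
  have hcross : ∃ a b, T'.graph.Adj a b ∧ ¬D.Reachable (f a) (f b) := by
    by_contra! hall
    have hreach : ∀ a b, D.Reachable (f a) (f b) := fun a b =>
      (reachable_iff_reflTransGen _ _).mpr <|
        Relation.ReflTransGen.lift' f (fun a b hab => (reachable_iff_reflTransGen _ _).mp
          (hall a b hab)) _ _ ((reachable_iff_reflTransGen _ _).mp
          (T'.isTree.connected.preconnected a b))
    obtain ⟨a₀⟩ := T'.nonempty
    have hD : ∀ w, D.Reachable (f a₀) w := fun w => by
      obtain ⟨_, ⟨a, rfl⟩, _, ⟨b, rfl⟩, hw⟩ := T.exists_mem_support_geodesic (Set.range f)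
        ⟨f a₀, a₀, rfl⟩ (by rintro g _ ⟨a, rfl⟩; exact ⟨g • a, f.map_smul g a⟩) w
      exact (hreach a₀ a).trans (GTree.reachable_of_mem_support_geodesic (hreach a b) hw)
    exact isBridge_iff.mp (isAcyclic_iff_forall_adj_isBridge.mp T.isTree.isAcyclic huv)
      ((hD u).symm.trans (hD v))
  obtain ⟨a, b, hab, hnr⟩ := hcross
  have he := GTree.mem_edges_geodesic_iff.mpr hnr
  refine ⟨a, b, hab, fun g ⟨hga, hgb⟩ => ?_⟩
  have hfa : T.act g (f a) = f a := (f.map_smul g a).symm.trans (congrArg f hga)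
  have hfb : T.act g (f b) = f b := (f.map_smul g b).symm.trans (congrArg f hgb)
  exact ⟨GTree.act_eq_of_mem_support_geodesic hfa hfb (Walk.fst_mem_support_of_mem_edges _ he),
    GTree.act_eq_of_mem_support_geodesic hfa hfb (Walk.snd_mem_support_of_mem_edges _ he)⟩

def EdgeStabsBiElliptic (T T' : GTree G) : Prop :=
  ∀ u v : T.V, T.graph.Adj u v → BiElliptic T' (T.edgeStab u v)

theorem BiElliptic.mono {T : GTree G} {H K : Subgroup G} (hHK : H ≤ K) (hK : BiElliptic T K) :
    BiElliptic T H :=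
  let ⟨a, b, hab, hfix⟩ := hK
  ⟨a, b, hab, fun h hh => hfix h (hHK hh)⟩

theorem GMorphism.edgeStabsBiElliptic {T T' : GTree G} (m : GMorphism T T') :
    EdgeStabsBiElliptic T T' := by
  intro u v huv
  set W := m.edgeWalk u v huv
  refine ⟨m.f u, W.snd, (W.adj_snd (m.edgeWalk_ne_nil u v huv)).ne, fun g ⟨hgu, hgv⟩ => ?_⟩
  have hfix : ∀ x ∈ W.support, T'.act g x = x := by
    have h := m.edgeWalk_equivariant g u v huv
    have hcongr : ∀ u' v' (h' : T.graph.Adj u' v'), u' = u → v' = v →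
        (m.edgeWalk u' v' h').support = W.support := by
      rintro _ _ _ rfl rfl
      rfl
    rw [hcongr _ _ _ hgu hgv] at h
    exact List.map_eq_map_iff.mp (h.symm.trans (List.map_id _).symm)
  exact ⟨hfix _ W.start_mem_support, hfix _ (W.getVert_mem_support 1)⟩

namespace EdgeStabsBiElliptic

variable {T T' : GTree G}

theorem exists_mulActionHom_prod (h : EdgeStabsBiElliptic T T') (f : T.V →[G] T'.V) :
    ∃ P : T.V × T.V →[G] T'.V × T'.V,
      ∀ u v, T.graph.Adj u v → T'.graph.Adj (P (u, v)).1 (P (u, v)).2 := by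
  have hfix : ∀ x : T.V × T.V, ∃ y : T'.V × T'.V,
      (T.graph.Adj x.1 x.2 → T'.graph.Adj y.1 y.2) ∧
        MulAction.stabilizer G x ≤ MulAction.stabilizer G y := by
    rintro ⟨u, v⟩
    by_cases huv : T.graph.Adj u v
    · obtain ⟨a, b, hab, hle⟩ := T'.biElliptic_iff.mp (h u v huv)
      refine ⟨(a, b), fun _ => hab, fun g hg => ?_⟩
      obtain ⟨hgu, hgv⟩ := Prod.mk.inj hg
      obtain ⟨hga, hgb⟩ := hle ⟨hgu, hgv⟩
      exact Prod.ext hga hgb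
    · refine ⟨(f u, f u), fun h => absurd h huv, fun g hg => ?_⟩
      have hgfu := (f.map_smul g u).symm.trans (congrArg f (Prod.mk.inj hg).1)
      exact Prod.ext hgfu hgfu
  obtain ⟨P, hP⟩ := MulAction.exists_mulActionHom_of_stabilizer_le _
    (fun g _ _ hxy hadj => T'.adj_act g _ _ (hxy ((T.adj_act_iff g).mp hadj))) hfix
  exact ⟨P, fun u v => hP (u, v)⟩

theorem nonempty_gMorphism (h : EdgeStabsBiElliptic T T') (hsame : SameDef T T') :
    Nonempty (GMorphism T T') := by
  obtain ⟨f⟩ := hsame.nonempty_mulActionHom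
  obtain ⟨P, hP⟩ := h.exists_mulActionHom_prod f
  -- backtracking across the edges `P (u, v)` and `P (v, u)` makes the image of `uv`
  -- nondegenerate and reversed by `uv ↦ vu`
  let W : ∀ u v, T.graph.Adj u v → T'.graph.Walk (f u) (f v) := fun u v huv =>
    (T'.geodesic (f u) (P (u, v)).1).append (.cons (hP u v huv) (.cons (hP u v huv).symm
      ((T'.geodesic _ (P (v, u)).1).append (.cons (hP v u huv.symm)
        (.cons (hP v u huv.symm).symm (T'.geodesic _ (f v)))))))
  have hW : ∀ u v huv, (W u v huv).support =
      (T'.geodesic (f u) (P (u, v)).1).support ++ (P (u, v)).2 ::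
        ((T'.geodesic (P (u, v)).1 (P (v, u)).1).support ++ (P (v, u)).2 ::
          (T'.geodesic (P (v, u)).1 (f v)).support) := by
    intro u v huv
    simp [W, Walk.support_append]
  refine ⟨⟨f, f.map_smul, W, fun u v huv => ?_, fun u v huv => ?_, fun g u v huv => ?_⟩⟩
  · simp [W]
  · rw [hW v u huv.symm, hW u v huv, T'.support_geodesic_comm (f v),
      T'.support_geodesic_comm (P (v, u)).1 (P (u, v)).1,
      T'.support_geodesic_comm (P (u, v)).1 (f u)]
    simp
  · have hPg : ∀ u v,
        P (T.act g u, T.act g v) = (T'.act g (P (u, v)).1, T'.act g (P (u, v)).2) :=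
      fun u v => P.map_smul g (u, v)
    have hfg : ∀ u, f (T.act g u) = T'.act g (f u) := f.map_smul g
    rw [hW _ _ (T.adj_act g u v huv), hW u v huv, hfg, hfg, hPg, hPg]
    simp only [GTree.support_geodesic_act, List.map_append, List.map_cons]

end EdgeStabsBiElliptic

namespace GTree.Reduced

variable {T T' : GTree G}

theorem not_existsUnique_fixed (hred : T.Reduced) (hsame : SameDef T T') {u v : T.V}
    (huv : T.graph.Adj u v) (hle : T.stab u ≤ T.stab v) :
    ¬∃! x : T'.V, ∀ h ∈ T.stab u, T'.act h x = x := by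
  rintro ⟨x, hx, huniq⟩
  obtain ⟨g, hg⟩ := hred u v huv hle
  -- `g G_u g⁻¹ = G_v ≥ G_u`, so `g` preserves the fixed point set of `G_u`
  have hgx : T'.act g x = x := huniq _ fun h hh => by
    have hconj : g⁻¹ * h * g ∈ T.stab u := by
      change (g⁻¹ * h * g) • u = u
      rw [mul_smul, mul_smul, inv_smul_eq_iff]
      change T.act h (T.act g u) = T.act g u
      rw [hg]
      exact hle hh
    have := hx _ hconj
    change (g⁻¹ * h * g) • x = x at this
    rwa [mul_smul, mul_smul, inv_smul_eq_iff] at this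
  obtain ⟨w, hw⟩ := (hsame (T'.stab x)).mpr ⟨x, fun _ h => h⟩
  exact GTree.not_adj_act_of_act_eq (hw g hgx) u (hg ▸ huv)

theorem edgeStabsBiElliptic (hred : T.Reduced) (hsame : SameDef T T') :
    EdgeStabsBiElliptic T T' := by
  intro u v huv
  by_contra hnot
  obtain ⟨x, hx⟩ := (hsame (T.edgeStab u v)).mp ⟨u, fun _ h => (Subgroup.mem_inf.mp h).1⟩
  have huniq : ∀ y, (∀ h ∈ T.edgeStab u v, T'.act h y = y) → y = x := fun y hy =>
    by_contra fun hne => hnot ⟨y, x, hne, fun h hh => ⟨hy h hh, hx h hh⟩⟩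
  have hends : ∀ a, (a = u ∨ a = v) →
      (∀ h ∈ T.stab a, T'.act h x = x) ∧ ∃! y, ∀ h ∈ T.stab a, T'.act h y = y := by
    rintro a ha
    have hle : T.edgeStab u v ≤ T.stab a := by
      rcases ha with rfl | rfl
      exacts [inf_le_left, inf_le_right]
    obtain ⟨y, hy⟩ := (hsame (T.stab a)).mp ⟨a, fun _ h => h⟩
    have hyx : y = x := huniq y fun h hh => hy h (hle hh)
    exact ⟨hyx ▸ hy, y, hy, fun z hz => (huniq z fun h hh => hz h (hle hh)).trans hyx.symm⟩
  obtain ⟨w, hw⟩ := (hsame (T'.stab x)).mpr ⟨x, fun _ h => h⟩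
  rcases GTree.mem_support_geodesic_or huv w with h | h
  · exact hred.not_existsUnique_fixed hsame huv (fun g hg =>
      GTree.act_eq_of_mem_support_geodesic (hw g ((hends u (.inl rfl)).1 g hg)) hg h)
      (hends u (.inl rfl)).2
  · exact hred.not_existsUnique_fixed hsame huv.symm (fun g hg =>
      GTree.act_eq_of_mem_support_geodesic (hw g ((hends v (.inr rfl)).1 g hg)) hg h)
      (hends v (.inr rfl)).2

end GTree.Reduced

section Characterizations

variable {T T' : GTree G}

theorem GenEdgeGroup.of_edgeStabsBiElliptic (hsame : SameDef T T')
    (h : EdgeStabsBiElliptic T T') {H : Subgroup G} (hH : GenEdgeGroup T H) :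
    GenEdgeGroup T' H := by
  obtain ⟨u, v, u', v', huv, hu'v', hlo, hhi⟩ := hH
  obtain ⟨a, b, hab, hab_le⟩ := exists_edgeStab_le_of_sameDef hsame huv
  obtain ⟨a', b', ha'b', hle'⟩ := T'.biElliptic_iff.mp (h u' v' hu'v')
  exact ⟨a, b, a', b', hab, ha'b', hab_le.trans hlo, hhi.trans hle'⟩

theorem edgeStabsBiElliptic_of_genEdgeGroup
    (h : ∀ H : Subgroup G, GenEdgeGroup T H → GenEdgeGroup T' H) : EdgeStabsBiElliptic T T' :=
  fun u v huv => by
    obtain ⟨-, -, a, b, -, hab, -, hle⟩ := h _ ⟨u, v, u, v, huv, huv, le_rfl, le_rfl⟩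
    exact T'.biElliptic_iff.mpr ⟨a, b, hab, hle⟩

theorem BiElliptic.of_edgeStabsBiElliptic (h : EdgeStabsBiElliptic T T') {H : Subgroup G}
    (hH : BiElliptic T H) : BiElliptic T' H :=
  let ⟨a, b, hab, hle⟩ := T.biElliptic_iff.mp hH
  (h a b hab).mono hle

theorem edgeStabsBiElliptic_of_biElliptic
    (h : ∀ H : Subgroup G, BiElliptic T H → BiElliptic T' H) : EdgeStabsBiElliptic T T' :=
  fun u v huv => h _ ⟨u, v, huv.ne, fun _ hg => Subgroup.mem_inf.mp hg⟩

theorem nonempty_gMorphism_and_iff (hsame : SameDef T T') :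
    (Nonempty (GMorphism T T') ∧ Nonempty (GMorphism T' T)) ↔
      EdgeStabsBiElliptic T T' ∧ EdgeStabsBiElliptic T' T :=
  ⟨fun ⟨⟨m⟩, ⟨m'⟩⟩ => ⟨m.edgeStabsBiElliptic, m'.edgeStabsBiElliptic⟩,
    fun ⟨h, h'⟩ => ⟨h.nonempty_gMorphism hsame, h'.nonempty_gMorphism hsame.symm⟩⟩

theorem forall_genEdgeGroup_iff_iff (hsame : SameDef T T') :
    (∀ H : Subgroup G, GenEdgeGroup T H ↔ GenEdgeGroup T' H) ↔
      EdgeStabsBiElliptic T T' ∧ EdgeStabsBiElliptic T' T :=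
  ⟨fun h => ⟨edgeStabsBiElliptic_of_genEdgeGroup fun H => (h H).1,
      edgeStabsBiElliptic_of_genEdgeGroup fun H => (h H).2⟩,
    fun ⟨h, h'⟩ _ => ⟨.of_edgeStabsBiElliptic hsame h, .of_edgeStabsBiElliptic hsame.symm h'⟩⟩

theorem forall_biElliptic_iff_iff :
    (∀ H : Subgroup G, BiElliptic T H ↔ BiElliptic T' H) ↔
      EdgeStabsBiElliptic T T' ∧ EdgeStabsBiElliptic T' T :=
  ⟨fun h => ⟨edgeStabsBiElliptic_of_biElliptic fun H => (h H).1,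
      edgeStabsBiElliptic_of_biElliptic fun H => (h H).2⟩,
    fun ⟨h, h'⟩ _ => ⟨.of_edgeStabsBiElliptic h, .of_edgeStabsBiElliptic h'⟩⟩

end Characterizations

theorem statement_5_general {G : Type u} [Group G] (T T' : GTree G)
    (hsame : SameDef T T') :
    ((Nonempty (GMorphism T T') ∧ Nonempty (GMorphism T' T)) ↔
      (∀ H : Subgroup G, GenEdgeGroup T H ↔ GenEdgeGroup T' H)) ∧
    ((∀ H : Subgroup G, GenEdgeGroup T H ↔ GenEdgeGroup T' H) ↔
      (∀ H : Subgroup G, BiElliptic T H ↔ BiElliptic T' H)) ∧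
    (T.Reduced → T'.Reduced →
      (Nonempty (GMorphism T T') ∧ Nonempty (GMorphism T' T))) :=
  ⟨(nonempty_gMorphism_and_iff hsame).trans (forall_genEdgeGroup_iff_iff hsame).symm,
    (forall_genEdgeGroup_iff_iff hsame).trans forall_biElliptic_iff_iff.symm,
    fun hred hred' => (nonempty_gMorphism_and_iff hsame).mpr
      ⟨hred.edgeStabsBiElliptic hsame, hred'.edgeStabsBiElliptic hsame.symm⟩⟩

/-- **Proposition (Guirardel–Levitt, Proposition 4.8).** For simplicial `G`-trees `T, T'`
in the same deformation space, the following are equivalent: (1) there are morphisms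
`T → T'` and `T' → T`; (2) `T` and `T'` have the same generalized edge groups; (3) `T`
and `T'` have the same bi-elliptic groups.  These conditions hold when `T` and `T'` are
both reduced. -/
theorem statement_5 {G : Type u} [Group G] [Group.FG G] (T T' : GTree G)
    (hsame : SameDef T T') :
    ((Nonempty (GMorphism T T') ∧ Nonempty (GMorphism T' T)) ↔
      (∀ H : Subgroup G, GenEdgeGroup T H ↔ GenEdgeGroup T' H)) ∧
    ((∀ H : Subgroup G, GenEdgeGroup T H ↔ GenEdgeGroup T' H) ↔
      (∀ H : Subgroup G, BiElliptic T H ↔ BiElliptic T' H)) ∧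
    (T.Reduced → T'.Reduced →
      (Nonempty (GMorphism T T') ∧ Nonempty (GMorphism T' T))) :=
  statement_5_general T T' hsame
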